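/- Let Σ be a symmetric positive definite real N×N matrix with vᵀ Σ v ≤ c ‖v‖² for all v ∈ ℝᴺ, and let Λ be a real N×r matrix with b ‖w‖² ≤ wᵀ (Λᵀ Λ) w ≤ B ‖w‖² for all w ∈ ℝʳ, where b, c > 0 and B ≥ 0. Then Λᵀ Σ⁻¹ Λ is invertible and for every v ∈ ℝᴺ, vᵀ Λ (Λᵀ Σ⁻¹ Λ)⁻¹ Λᵀ v ≤ (c · B / b) ‖v‖². -/

import Mathlib

/-!
Write `M = Λᵀ Σ⁻¹ Λ`. Cauchy–Schwarz for the form of `Σ` turns `Σ ≤ c` into `Σ⁻¹ ≥ 1 / c`,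
so `M ≥ b / c`; in particular `M` is invertible and `M⁻¹ ≤ c / b`. Hence
`vᵀ Λ M⁻¹ Λᵀ v ≤ (c / b) ‖Λᵀ v‖²`, and `‖Λᵀ v‖² ≤ B ‖v‖²` because `Λᵀ` has the same operator
norm as `Λ`.
-/

open Matrix

namespace Matrix

variable {m n : Type*} [Fintype m] [Fintype n]

theorem sq_dotProduct_le (v w : n → ℝ) : (v ⬝ᵥ w) ^ 2 ≤ (v ⬝ᵥ v) * (w ⬝ᵥ w) := by
  simpa only [dotProduct, sq] using Finset.sum_mul_sq_le_sq_mul_sq Finset.univ v w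

theorem dotProduct_self_nonneg (v : n → ℝ) : 0 ≤ v ⬝ᵥ v :=
  Finset.sum_nonneg fun i _ => mul_self_nonneg (v i)

theorem dotProduct_transpose_mul_mulVec (Λ : Matrix m n ℝ) (A : Matrix m m ℝ) (w : n → ℝ) :
    w ⬝ᵥ (Λᵀ * A * Λ) *ᵥ w = (Λ *ᵥ w) ⬝ᵥ A *ᵥ (Λ *ᵥ w) := by
  rw [← mulVec_mulVec, ← mulVec_mulVec, dotProduct_mulVec, vecMul_transpose]

theorem dotProduct_transpose_mul_self_mulVec (Λ : Matrix m n ℝ) (w : n → ℝ) :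
    w ⬝ᵥ (Λᵀ * Λ) *ᵥ w = (Λ *ᵥ w) ⬝ᵥ (Λ *ᵥ w) := by
  rw [← mulVec_mulVec, dotProduct_mulVec, vecMul_transpose]

open scoped MatrixOrder in
theorem PosSemidef.sq_dotProduct_mulVec_le {A : Matrix n n ℝ} (hA : A.PosSemidef) (x y : n → ℝ) :
    (x ⬝ᵥ A *ᵥ y) ^ 2 ≤ (x ⬝ᵥ A *ᵥ x) * (y ⬝ᵥ A *ᵥ y) := by
  classical
  obtain ⟨R, rfl⟩ := CStarAlgebra.nonneg_iff_eq_star_mul_self.mp hA.nonneg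
  have hform : ∀ u v : n → ℝ, u ⬝ᵥ (star R * R) *ᵥ v = (R *ᵥ u) ⬝ᵥ (R *ᵥ v) := fun u v => by
    rw [star_eq_conjTranspose, conjTranspose_eq_transpose_of_trivial, ← mulVec_mulVec,
      dotProduct_mulVec, vecMul_transpose]
  simpa only [hform] using sq_dotProduct_le (R *ᵥ x) (R *ᵥ y)

theorem PosDef.le_dotProduct_inv_mulVec [DecidableEq n] {S : Matrix n n ℝ} (hS : S.PosDef) {c : ℝ}
    (hSc : ∀ x : n → ℝ, x ⬝ᵥ S *ᵥ x ≤ c * (x ⬝ᵥ x)) (x : n → ℝ) :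
    x ⬝ᵥ x ≤ c * (x ⬝ᵥ S⁻¹ *ᵥ x) := by
  obtain rfl | hx := eq_or_ne x 0
  · simp
  have hxx : 0 < x ⬝ᵥ x := lt_of_le_of_ne (dotProduct_self_nonneg x)
    (Ne.symm (dotProduct_self_eq_zero.not.mpr hx))
  have hSy : S *ᵥ (S⁻¹ *ᵥ x) = x := by
    rw [mulVec_mulVec, mul_nonsing_inv _ (isUnit_iff_ne_zero.mpr hS.det_pos.ne'), one_mulVec]
  have hcs : (x ⬝ᵥ x) ^ 2 ≤ (x ⬝ᵥ S *ᵥ x) * (x ⬝ᵥ S⁻¹ *ᵥ x) := by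
    have h := hS.posSemidef.sq_dotProduct_mulVec_le x (S⁻¹ *ᵥ x)
    rwa [hSy, dotProduct_comm (S⁻¹ *ᵥ x)] at h
  have hinv : 0 ≤ x ⬝ᵥ S⁻¹ *ᵥ x := by
    simpa using hS.inv.posSemidef.dotProduct_mulVec_nonneg x
  nlinarith [mul_le_mul_of_nonneg_right (hSc x) hinv]

theorem isUnit_of_le_dotProduct_mulVec [DecidableEq n] {A : Matrix n n ℝ} {α : ℝ} (hα : 0 < α)
    (hA : ∀ x : n → ℝ, α * (x ⬝ᵥ x) ≤ x ⬝ᵥ A *ᵥ x) : IsUnit A := by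
  refine mulVec_injective_iff_isUnit.mp <| (injective_iff_map_eq_zero A.mulVecLin).mpr ?_
  intro x hx
  have h := hA x
  change A *ᵥ x = 0 at hx
  rw [hx, dotProduct_zero] at h
  exact dotProduct_self_eq_zero.mp
    (le_antisymm (nonpos_of_mul_nonpos_right h hα) (dotProduct_self_nonneg x))

theorem dotProduct_inv_mulVec_le [DecidableEq n] {A : Matrix n n ℝ} {α : ℝ} (hα : 0 < α)
    (hA : ∀ x : n → ℝ, α * (x ⬝ᵥ x) ≤ x ⬝ᵥ A *ᵥ x) (x : n → ℝ) :
    α * (x ⬝ᵥ A⁻¹ *ᵥ x) ≤ x ⬝ᵥ x := by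
  set z := A⁻¹ *ᵥ x
  have hAz : A *ᵥ z = x := by
    rw [mulVec_mulVec, mul_nonsing_inv _ ((isUnit_of_le_dotProduct_mulVec hα hA).map detMonoidHom),
      one_mulVec]
  have hz : α * (z ⬝ᵥ z) ≤ x ⬝ᵥ z := by
    simpa only [hAz, dotProduct_comm z x] using hA z
  have hcs := sq_dotProduct_le x z
  have hxx := dotProduct_self_nonneg x
  rcases le_or_gt (x ⬝ᵥ z) 0 with hxz | hxz
  · nlinarith
  · nlinarith [mul_le_mul_of_nonneg_left hz hxx]

theorem transpose_mulVec_dotProduct_le {Λ : Matrix m n ℝ} {B : ℝ} (hB : 0 ≤ B)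
    (hΛ : ∀ w : n → ℝ, Λ *ᵥ w ⬝ᵥ Λ *ᵥ w ≤ B * (w ⬝ᵥ w)) (v : m → ℝ) :
    Λᵀ *ᵥ v ⬝ᵥ Λᵀ *ᵥ v ≤ B * (v ⬝ᵥ v) := by
  have hu : v ⬝ᵥ Λ *ᵥ (Λᵀ *ᵥ v) = Λᵀ *ᵥ v ⬝ᵥ Λᵀ *ᵥ v := by
    rw [dotProduct_mulVec, ← mulVec_transpose]
  set u := Λᵀ *ᵥ v
  have hcs := sq_dotProduct_le v (Λ *ᵥ u)
  have hvv := dotProduct_self_nonneg v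
  rcases (dotProduct_self_nonneg u).eq_or_lt with huu | huu
  · rw [← huu]
    positivity
  · nlinarith [mul_le_mul_of_nonneg_left (hΛ u) hvv]

end Matrix

/-- Deterministic bound π_max(Λ (Λᵀ Σ⁻¹ Λ)⁻¹ Λᵀ) ≤ c·B/b used to control A₄ in
Lemma S.1: if the largest eigenvalue of the symmetric positive definite Σ is at
most c and the eigenvalues of Λᵀ Λ lie in [b, B] with b > 0, then Λᵀ Σ⁻¹ Λ is
invertible and vᵀ Λ (Λᵀ Σ⁻¹ Λ)⁻¹ Λᵀ v ≤ (c B / b) ‖v‖² for every v. -/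
theorem projection_quadratic_upper_bound (N r : ℕ)
    (S : Matrix (Fin N) (Fin N) ℝ) (hS : S.PosDef)
    (Λ : Matrix (Fin N) (Fin r) ℝ) (b c B : ℝ) (hb : 0 < b) (hc : 0 < c) (hB : 0 ≤ B)
    (hSc : ∀ v : Fin N → ℝ, v ⬝ᵥ S *ᵥ v ≤ c * (v ⬝ᵥ v))
    (hlow : ∀ w : Fin r → ℝ, b * (w ⬝ᵥ w) ≤ w ⬝ᵥ (Λᵀ * Λ) *ᵥ w)
    (hup : ∀ w : Fin r → ℝ, w ⬝ᵥ (Λᵀ * Λ) *ᵥ w ≤ B * (w ⬝ᵥ w)) :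
    IsUnit (Λᵀ * S⁻¹ * Λ) ∧
      ∀ v : Fin N → ℝ,
        v ⬝ᵥ (Λ * (Λᵀ * S⁻¹ * Λ)⁻¹ * Λᵀ) *ᵥ v ≤ (c * B / b) * (v ⬝ᵥ v) := by
  set M := Λᵀ * S⁻¹ * Λ
  have hbc : 0 < b / c := div_pos hb hc
  have hM : ∀ w : Fin r → ℝ, b / c * (w ⬝ᵥ w) ≤ w ⬝ᵥ M *ᵥ w := fun w => by
    have hΛw := hlow w
    rw [dotProduct_transpose_mul_self_mulVec] at hΛw
    rw [dotProduct_transpose_mul_mulVec, div_mul_eq_mul_div, div_le_iff₀ hc]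
    linarith [hS.le_dotProduct_inv_mulVec hSc (Λ *ᵥ w)]
  refine ⟨isUnit_of_le_dotProduct_mulVec hbc hM, fun v => ?_⟩
  have hΛt : Λᵀ *ᵥ v ⬝ᵥ Λᵀ *ᵥ v ≤ B * (v ⬝ᵥ v) :=
    transpose_mulVec_dotProduct_le hB (fun w => dotProduct_transpose_mul_self_mulVec Λ w ▸ hup w) v
  have hMinv := dotProduct_inv_mulVec_le hbc hM (Λᵀ *ᵥ v)
  have hform := dotProduct_transpose_mul_mulVec Λᵀ M⁻¹ v
  rw [transpose_transpose] at hform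
  rw [hform]
  calc Λᵀ *ᵥ v ⬝ᵥ M⁻¹ *ᵥ (Λᵀ *ᵥ v) = c / b * (b / c * (Λᵀ *ᵥ v ⬝ᵥ M⁻¹ *ᵥ (Λᵀ *ᵥ v))) := by
        field_simp
    _ ≤ c / b * (B * (v ⬝ᵥ v)) := mul_le_mul_of_nonneg_left (hMinv.trans hΛt) (by positivity)
    _ = c * B / b * (v ⬝ᵥ v) := by ring
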